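/- arXiv:2007.06708 — 5 statements merged into one kernel-verified Lean document; each statement's English description precedes it below -/
import Mathlib

section
/- Let M ∈ ℂ^{n×n} be Hermitian and let ẑ ∈ ℂ₁ⁿ be a local minimizer of the function z ↦ zᴴ M z over ℂ₁ⁿ. Define the real diagonal matrix Λ̂ = Re(ddiag(M ẑ ẑᴴ)) and Ŝ = M − Λ̂. Then: (1) Ŝ ẑ = 0; and (2) for every ż ∈ ℂⁿ with Re(ż_i · conj(ẑ_i)) = 0 for all i = 1,…,n, one has Re(żᴴ Ŝ ż) ≥ 0. (Paper's Lemma 1.) -/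
open Matrix Complex

noncomputable section

/-- `certMat M z = M - Re(ddiag(M z zᴴ))`, the certificate matrix `Ŝ`. -/
def certMat {n : ℕ} (M : Matrix (Fin n) (Fin n) ℂ) (z : Fin n → ℂ) :
    Matrix (Fin n) (Fin n) ℂ :=
  M - Matrix.diagonal (fun i => (((M.mulVec z i) * star (z i)).re : ℂ))

/-!
On `ℂ₁ⁿ` the form `zᴴ Λ̂ z = tr Λ̂` is constant, so `ẑ` also minimises `Re (zᴴ Ŝ z)` there. Along the
torus curve `c t = (ẑᵢ exp (t żᵢ conj ẑᵢ))ᵢ` with tangent `ż`, writing `u = (c t - ẑ) / t`,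
`Re (c tᴴ Ŝ c t) = Re (ẑᴴ Ŝ ẑ) + 2 t Re (uᴴ Ŝ ẑ) + t² Re (uᴴ Ŝ u)`.
Letting `t → 0⁺` gives `Re (żᴴ Ŝ ẑ) ≥ 0`; since `ż = -Ŝ ẑ` is itself tangent, `Ŝ ẑ = 0`. The linear
term then vanishes, and dividing by `t²` gives `Re (żᴴ Ŝ ż) ≥ 0` in the limit.
-/

open Topology Filter
open scoped ComplexOrder

section HermitianForm

variable {ι : Type*} [Fintype ι] {S : Matrix ι ι ℂ}

lemma star_dotProduct_mulVec_of_isHermitian (hS : S.IsHermitian) (x u : ι → ℂ) :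
    star x ⬝ᵥ S *ᵥ u = star (star u ⬝ᵥ S *ᵥ x) := by
  rw [star_dotProduct, star_mulVec, hS.eq, ← dotProduct_mulVec]

lemma re_star_dotProduct_mulVec_add_smul (hS : S.IsHermitian) (x u : ι → ℂ) (t : ℝ) :
    (star (x + t • u) ⬝ᵥ S *ᵥ (x + t • u)).re = (star x ⬝ᵥ S *ᵥ x).re
      + 2 * t * (star u ⬝ᵥ S *ᵥ x).re + t ^ 2 * (star u ⬝ᵥ S *ᵥ u).re := by
  simp only [star_add, star_smul, star_trivial, mulVec_add, mulVec_smul, dotProduct_add,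
    add_dotProduct, dotProduct_smul, smul_dotProduct, add_re, smul_re,
    star_dotProduct_mulVec_of_isHermitian hS x u, Complex.star_def, conj_re, smul_eq_mul]
  ring

lemma re_star_dotProduct_mulVec_eq_slope (hS : S.IsHermitian) (c : ℝ → ι → ℂ) (t : ℝ) :
    (star (c t) ⬝ᵥ S *ᵥ c t).re = (star (c 0) ⬝ᵥ S *ᵥ c 0).re
      + 2 * t * (star (slope c 0 t) ⬝ᵥ S *ᵥ c 0).re
      + t ^ 2 * (star (slope c 0 t) ⬝ᵥ S *ᵥ slope c 0 t).re := by
  have hct : c t = c 0 + t • slope c 0 t := by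
    simpa [add_comm] using (sub_smul_slope_vadd c 0 t).symm
  rw [← re_star_dotProduct_mulVec_add_smul hS, ← hct]

variable {c : ℝ → ι → ℂ} {v : ι → ℂ}

lemma re_star_dotProduct_mulVec_nonneg_of_isLocalMin (hS : S.IsHermitian)
    (hc : HasDerivAt c v 0) (hmin : IsLocalMin (fun t => (star (c t) ⬝ᵥ S *ᵥ c t).re) 0) :
    0 ≤ (star v ⬝ᵥ S *ᵥ c 0).re := by
  have hslope : Tendsto (slope c 0) (𝓝[>] 0) (𝓝 v) :=
    (hasDerivAt_iff_tendsto_slope.mp hc).mono_left (nhdsGT_le_nhdsNE 0)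
  have hB : Continuous fun u : ι → ℂ => (star u ⬝ᵥ S *ᵥ c 0).re := by fun_prop
  have hQ : Continuous fun u : ι → ℂ => (star u ⬝ᵥ S *ᵥ u).re := by fun_prop
  have hlim : Tendsto (fun t => 2 * (star (slope c 0 t) ⬝ᵥ S *ᵥ c 0).re
      + t * (star (slope c 0 t) ⬝ᵥ S *ᵥ slope c 0 t).re) (𝓝[>] 0)
      (𝓝 (2 * (star v ⬝ᵥ S *ᵥ c 0).re + 0 * (star v ⬝ᵥ S *ᵥ v).re)) :=
    (((hB.tendsto v).comp hslope).const_mul 2).add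
      ((tendsto_nhdsWithin_of_tendsto_nhds tendsto_id).mul ((hQ.tendsto v).comp hslope))
  have hnonneg : ∀ᶠ t in 𝓝[>] 0, 0 ≤ 2 * (star (slope c 0 t) ⬝ᵥ S *ᵥ c 0).re
      + t * (star (slope c 0 t) ⬝ᵥ S *ᵥ slope c 0 t).re := by
    filter_upwards [nhdsWithin_le_nhds hmin, self_mem_nhdsWithin] with t hle (ht : 0 < t)
    rw [re_star_dotProduct_mulVec_eq_slope hS c t] at hle
    exact nonneg_of_mul_nonneg_right (by linarith) ht
  simpa using ge_of_tendsto hlim hnonneg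

lemma re_star_dotProduct_mulVec_self_nonneg_of_isLocalMin (hS : S.IsHermitian)
    (hc : HasDerivAt c v 0) (hSc : S *ᵥ c 0 = 0)
    (hmin : IsLocalMin (fun t => (star (c t) ⬝ᵥ S *ᵥ c t).re) 0) :
    0 ≤ (star v ⬝ᵥ S *ᵥ v).re := by
  have hQ : Continuous fun u : ι → ℂ => (star u ⬝ᵥ S *ᵥ u).re := by fun_prop
  have hnonneg : ∀ᶠ t in 𝓝[≠] 0, 0 ≤ (star (slope c 0 t) ⬝ᵥ S *ᵥ slope c 0 t).re := by
    filter_upwards [nhdsWithin_le_nhds hmin, self_mem_nhdsWithin] with t hle (ht : t ≠ 0)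
    simp only [re_star_dotProduct_mulVec_eq_slope hS c t, hSc, dotProduct_zero, zero_re,
      mul_zero, zero_add] at hle
    exact nonneg_of_mul_nonneg_right hle (pow_two_pos_of_ne_zero ht)
  exact ge_of_tendsto ((hQ.tendsto v).comp (hasDerivAt_iff_tendsto_slope.mp hc)) hnonneg

lemma eq_zero_of_re_star_dotProduct_self_nonpos {w : ι → ℂ} (h : (star w ⬝ᵥ w).re ≤ 0) :
    w = 0 := by
  have hpos := Complex.le_def.mp (dotProduct_star_self_nonneg w)
  refine dotProduct_star_self_eq_zero.mp (Complex.ext ?_ hpos.2.symm)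
  simpa using le_antisymm h hpos.1

end HermitianForm

section UnitTorus

variable {ι : Type*}

def unitTorus (ι : Type*) : Set (ι → ℂ) := {z | ∀ i, ‖z i‖ = 1}

def torusCurve (x v : ι → ℂ) (t : ℝ) : ι → ℂ := fun i => x i * exp (t * (v i * star (x i)))

lemma torusCurve_zero (x v : ι → ℂ) : torusCurve x v 0 = x := by
  ext i; simp [torusCurve]

lemma continuous_torusCurve (x v : ι → ℂ) : Continuous (torusCurve x v) := by
  unfold torusCurve; fun_prop

lemma torusCurve_mem_unitTorus {x v : ι → ℂ} (hx : x ∈ unitTorus ι)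
    (hv : ∀ i, (v i * star (x i)).re = 0) (t : ℝ) : torusCurve x v t ∈ unitTorus ι := fun i => by
  rw [torusCurve, norm_mul, hx i, norm_exp, re_ofReal_mul, hv i, mul_zero, Real.exp_zero, one_mul]

lemma hasDerivAt_torusCurve {x : ι → ℂ} (hx : x ∈ unitTorus ι) (v : ι → ℂ) :
    HasDerivAt (torusCurve x v) v 0 := by
  refine hasDerivAt_pi.mpr fun i => ?_
  have h := (((hasDerivAt_id (0 : ℂ)).mul_const (v i * star (x i))).cexp.const_mul (x i)).comp_ofReal
  refine h.congr_deriv ?_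
  simp only [id, zero_mul, exp_zero, one_mul]
  rw [mul_left_comm, Complex.star_def, mul_conj', hx i, ofReal_one, one_pow, mul_one]

lemma IsLocalMinOn.isLocalMin_comp_torusCurve {f : (ι → ℂ) → ℝ} {x v : ι → ℂ}
    (hf : IsLocalMinOn f (unitTorus ι) x) (hx : x ∈ unitTorus ι)
    (hv : ∀ i, (v i * star (x i)).re = 0) : IsLocalMin (f ∘ torusCurve x v) 0 := by
  rw [← torusCurve_zero x v] at hf
  exact isLocalMinOn_univ_iff.mp <| hf.comp_continuousOn
    (fun t _ => torusCurve_mem_unitTorus hx hv t) (continuous_torusCurve x v).continuousOn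
    (Set.mem_univ 0)

variable [Fintype ι] [DecidableEq ι]

lemma re_star_dotProduct_diagonal_mulVec_of_mem_unitTorus (d : ι → ℝ) {z : ι → ℂ}
    (hz : z ∈ unitTorus ι) : (star z ⬝ᵥ diagonal (fun i => (d i : ℂ)) *ᵥ z).re = ∑ i, d i := by
  simp only [dotProduct, mulVec_diagonal, Pi.star_apply, Complex.star_def, re_sum]
  refine Finset.sum_congr rfl fun i _ => ?_
  rw [mul_left_comm, conj_mul', hz i]
  simp

lemma IsLocalMinOn.sub_diagonal_ofReal {M : Matrix ι ι ℂ} {x : ι → ℂ}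
    (hmin : IsLocalMinOn (fun z => (star z ⬝ᵥ M *ᵥ z).re) (unitTorus ι) x) (hx : x ∈ unitTorus ι)
    (d : ι → ℝ) :
    IsLocalMinOn (fun z => (star z ⬝ᵥ (M - diagonal (fun i => (d i : ℂ))) *ᵥ z).re)
      (unitTorus ι) x := by
  filter_upwards [hmin, self_mem_nhdsWithin] with z hle hz
  simp only [sub_mulVec, dotProduct_sub, sub_re,
    re_star_dotProduct_diagonal_mulVec_of_mem_unitTorus d hx,
    re_star_dotProduct_diagonal_mulVec_of_mem_unitTorus d hz]
  linarith

end UnitTorus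

section CertMat

variable {n : ℕ} {M : Matrix (Fin n) (Fin n) ℂ}

lemma certMat_isHermitian (hM : M.IsHermitian) (z : Fin n → ℂ) : (certMat M z).IsHermitian :=
  hM.sub (isHermitian_diagonal_iff.mpr fun _ => conj_ofReal _)

lemma re_certMat_mulVec_mul_star {z : Fin n → ℂ} (hz : z ∈ unitTorus (Fin n)) (i : Fin n) :
    ((certMat M z *ᵥ z) i * star (z i)).re = 0 := by
  simp only [certMat, sub_mulVec, Pi.sub_apply, mulVec_diagonal, sub_mul, mul_assoc,
    Complex.star_def, mul_conj', hz i]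
  simp

end CertMat

/-- **Paper's Lemma 1.** If `ẑ ∈ ℂ₁ⁿ` is a local minimizer of `z ↦ zᴴ M z` over `ℂ₁ⁿ`
(`M` Hermitian), then with `Λ̂ = Re(ddiag(M ẑ ẑᴴ))` and `Ŝ = M - Λ̂` one has `Ŝ ẑ = 0`,
and `Re(żᴴ Ŝ ż) ≥ 0` for every `ż` in the tangent space at `ẑ`. -/
theorem stmt0 {n : ℕ} (M : Matrix (Fin n) (Fin n) ℂ) (hM : M.IsHermitian)
    (zhat : Fin n → ℂ) (hzhat : ∀ i, ‖zhat i‖ = 1)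
    (hloc : ∃ ε > (0 : ℝ), ∀ z : Fin n → ℂ, (∀ i, ‖z i‖ = 1) →
      dist z zhat < ε →
      (star zhat ⬝ᵥ M.mulVec zhat).re ≤ (star z ⬝ᵥ M.mulVec z).re) :
    (certMat M zhat).mulVec zhat = 0 ∧
      ∀ zdot : Fin n → ℂ, (∀ i, (zdot i * star (zhat i)).re = 0) →
        0 ≤ (star zdot ⬝ᵥ (certMat M zhat).mulVec zdot).re := by
  have hS := certMat_isHermitian hM zhat
  have hmin : IsLocalMinOn (fun z => (star z ⬝ᵥ certMat M zhat *ᵥ z).re) (unitTorus (Fin n))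
      zhat := by
    obtain ⟨ε, hε, hle⟩ := hloc
    exact IsLocalMinOn.sub_diagonal_ofReal
      (Metric.mem_nhdsWithin_iff.mpr ⟨ε, hε, fun z ⟨hzε, hz⟩ => hle z hz hzε⟩) hzhat _
  have hcurve := fun (v : Fin n → ℂ) (hv : ∀ i, (v i * star (zhat i)).re = 0) =>
    hmin.isLocalMin_comp_torusCurve hzhat hv
  have hfixed : certMat M zhat *ᵥ zhat = 0 := by
    set w := certMat M zhat *ᵥ zhat
    have hw : ∀ i, (-w i * star (zhat i)).re = 0 := fun i => by
      rw [neg_mul, neg_re, re_certMat_mulVec_mul_star hzhat i, neg_zero]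
    have h := re_star_dotProduct_mulVec_nonneg_of_isLocalMin hS
      (hasDerivAt_torusCurve hzhat (-w)) (hcurve (-w) hw)
    rw [torusCurve_zero, star_neg, neg_dotProduct, neg_re] at h
    exact eq_zero_of_re_star_dotProduct_self_nonpos (by linarith)
  exact ⟨hfixed, fun zdot hzdot => re_star_dotProduct_mulVec_self_nonneg_of_isLocalMin hS
    (hasDerivAt_torusCurve hzhat zdot) (by rwa [torusCurve_zero]) (hcurve zdot hzdot)⟩
end
end

section
/- Let M ∈ ℂ^{n×n} be Hermitian. A Hermitian matrix X̂ ∈ ℂ^{n×n} is a global minimizer of Re tr(M X) over the set {X Hermitian : X ⪰ 0, diag(X) = 𝟙} if and only if there exists a Hermitian matrix Ŝ ∈ ℂ^{n×n} such that: (1) diag(X̂) = 𝟙; (2) X̂ ⪰ 0; (3) Ŝ X̂ = 0; (4) M − Ŝ is a real diagonal matrix; (5) Ŝ ⪰ 0. (Paper's Lemma 2, equivalence part.) -/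
/-!
Sufficiency is weak duality: if `M = diag d + S` then for every feasible `X`,
`Re tr(M X) = ∑ dᵢ + Re tr(S X) ≥ ∑ dᵢ = Re tr(M X̂)`, because `tr(S X) = ‖C Dᴴ‖²_F` when
`S = Cᴴ C` and `X = Dᴴ D`.

For necessity the multipliers are forced: `dᵢ = Re (M X̂)ᵢᵢ`. Given any vector `v`, the curve
`t ↦ Dₜ (X̂ + t v vᴴ) Dₜ`, where the real diagonal `Dₜ` rescales the diagonal back to `𝟙`, stays
in the feasible set for `t ≥ 0`; its first-order optimality condition at `t = 0` is exactly
`vᴴ (M - diag d) v ≥ 0`. So `S = M - diag d ⪰ 0`, and `Re tr(S X̂) = 0` by the choice of `d`,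
which for positive semidefinite `S` and `X̂` forces `S X̂ = 0`.
-/

open Matrix
open scoped ComplexOrder

lemma HasDerivAt.nonneg_of_forall_lt_le {g : ℝ → ℝ} {g' x : ℝ} (hg : HasDerivAt g g' x)
    (h : ∀ t, x < t → g x ≤ g t) : 0 ≤ g' := by
  have hslope := (hasDerivWithinAt_iff_tendsto_slope' Set.self_notMem_Ioi).mp
    (hg.hasDerivWithinAt (s := Set.Ioi x))
  refine ge_of_tendsto hslope (eventually_nhdsWithin_of_forall fun t ht => ?_)
  rw [slope_def_field]
  exact div_nonneg (sub_nonneg.mpr (h t ht)) (sub_nonneg.mpr (le_of_lt ht))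

lemma hasDerivAt_inv_sqrt_one_add_mul (a : ℝ) :
    HasDerivAt (fun t : ℝ => (√(1 + t * a))⁻¹) (-a / 2) 0 := by
  refine ((((hasDerivAt_id (0 : ℝ)).mul_const a).const_add 1).sqrt (by simp) |>.inv
    (by simp)).congr_deriv ?_
  simp
  ring

namespace Matrix

variable {ι 𝕜 : Type*} [Fintype ι] [RCLike 𝕜]

open scoped MatrixOrder in
lemma PosSemidef.exists_mul_eq_and_trace_mul_eq {A B : Matrix ι ι 𝕜} (hA : A.PosSemidef)
    (hB : B.PosSemidef) : ∃ C D E : Matrix ι ι 𝕜,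
      A * B = Cᴴ * E * D ∧ (A * B).trace = (Eᴴ * E).trace := by
  classical
  obtain ⟨C, rfl⟩ := CStarAlgebra.nonneg_iff_eq_star_mul_self.mp hA.nonneg
  obtain ⟨D, rfl⟩ := CStarAlgebra.nonneg_iff_eq_star_mul_self.mp hB.nonneg
  refine ⟨C, D, C * Dᴴ, by simp [star_eq_conjTranspose, Matrix.mul_assoc], ?_⟩
  simp only [star_eq_conjTranspose, conjTranspose_mul, conjTranspose_conjTranspose]
  conv_rhs => rw [Matrix.mul_assoc, trace_mul_comm]
  simp only [Matrix.mul_assoc]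

lemma PosSemidef.trace_mul_nonneg {A B : Matrix ι ι 𝕜} (hA : A.PosSemidef)
    (hB : B.PosSemidef) : 0 ≤ (A * B).trace := by
  obtain ⟨-, -, E, -, htr⟩ := hA.exists_mul_eq_and_trace_mul_eq hB
  exact htr ▸ (posSemidef_conjTranspose_mul_self _).trace_nonneg

lemma PosSemidef.mul_eq_zero_of_trace_mul_eq_zero {A B : Matrix ι ι 𝕜} (hA : A.PosSemidef)
    (hB : B.PosSemidef) (h : (A * B).trace = 0) : A * B = 0 := by
  obtain ⟨C, D, E, hAB, htr⟩ := hA.exists_mul_eq_and_trace_mul_eq hB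
  rw [htr, trace_conjTranspose_mul_self_eq_zero_iff] at h
  rw [hAB, h, Matrix.mul_zero, Matrix.zero_mul]

lemma PosSemidef.of_re_dotProduct_mulVec_nonneg {A : Matrix ι ι 𝕜} (hA : A.IsHermitian)
    (h : ∀ x, 0 ≤ RCLike.re (star x ⬝ᵥ A *ᵥ x)) : A.PosSemidef :=
  .of_dotProduct_mulVec_nonneg hA fun x =>
    RCLike.nonneg_iff.mpr ⟨h x, hA.im_star_dotProduct_mulVec_self x⟩

lemma re_trace_mul_vecMulVec_star (M : Matrix ι ι 𝕜) (v : ι → 𝕜) :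
    RCLike.re (M * vecMulVec v (star v)).trace = RCLike.re (star v ⬝ᵥ M *ᵥ v) := by
  rw [mul_vecMulVec, trace_vecMulVec, dotProduct_comm]

variable [DecidableEq ι]

lemma PosSemidef.diagonal_ofReal_mul_mul_diagonal_ofReal {Z : Matrix ι ι 𝕜}
    (hZ : Z.PosSemidef) (c : ι → ℝ) :
    (diagonal (fun i => (c i : 𝕜)) * Z * diagonal (fun i => (c i : 𝕜))).PosSemidef := by
  have hc : star (fun i => (c i : 𝕜)) = fun i => (c i : 𝕜) := funext fun i => RCLike.conj_ofReal _
  simpa [diagonal_conjTranspose, hc] using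
    hZ.mul_mul_conjTranspose_same (diagonal fun i => (c i : 𝕜))

lemma re_trace_mul_diagonal_ofReal_mul_mul_diagonal_ofReal (M Z : Matrix ι ι 𝕜) (c : ι → ℝ) :
    RCLike.re (M * (diagonal (fun i => (c i : 𝕜)) * Z * diagonal (fun i => (c i : 𝕜)))).trace
      = ∑ i, ∑ j, c i * c j * RCLike.re (M i j * Z j i) := by
  simp only [trace, diag_apply, mul_apply (M := M), mul_diagonal, diagonal_mul, map_sum]
  refine Finset.sum_congr rfl fun i _ => Finset.sum_congr rfl fun j _ => ?_
  rw [show M i j * ((c j : 𝕜) * Z j i * c i) = ((c i * c j : ℝ) : 𝕜) * (M i j * Z j i) by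
    push_cast; ring, RCLike.re_ofReal_mul]

lemma hasDerivAt_re_trace_mul_diagonal_mul_mul_diagonal (M A B : Matrix ι ι 𝕜)
    {c : ι → ℝ → ℝ} {c' : ι → ℝ} (hc : ∀ i, HasDerivAt (c i) (c' i) 0) (hc0 : ∀ i, c i 0 = 1) :
    HasDerivAt (fun t : ℝ => RCLike.re (M * (diagonal (fun i => (c i t : 𝕜)) *
        (A + t • B) * diagonal (fun i => (c i t : 𝕜)))).trace)
      (RCLike.re (M * B).trace + RCLike.re (M * (diagonal (fun i => (c' i : 𝕜)) * A +
        A * diagonal (fun i => (c' i : 𝕜)))).trace) 0 := by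
  have hfun : (fun t : ℝ => RCLike.re (M * (diagonal (fun i => (c i t : 𝕜)) *
        (A + t • B) * diagonal (fun i => (c i t : 𝕜)))).trace) = fun t =>
      ∑ i, ∑ j, c i t * c j t * (RCLike.re (M i j * A j i) + t * RCLike.re (M i j * B j i)) := by
    ext t
    rw [re_trace_mul_diagonal_ofReal_mul_mul_diagonal_ofReal]
    simp only [add_apply, smul_apply, mul_add, mul_smul_comm, map_add, RCLike.smul_re]
  have hterm : ∀ i j, HasDerivAt (fun t : ℝ => c i t * c j t *
      (RCLike.re (M i j * A j i) + t * RCLike.re (M i j * B j i)))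
      ((c' i + c' j) * RCLike.re (M i j * A j i) + RCLike.re (M i j * B j i)) 0 := fun i j => by
    have hlin := ((hasDerivAt_id (0 : ℝ)).mul_const (RCLike.re (M i j * B j i))).const_add
      (RCLike.re (M i j * A j i))
    refine (((hc i).fun_mul (hc j)).fun_mul hlin).congr_deriv ?_
    simp [hc0]
  rw [hfun]
  refine (HasDerivAt.fun_sum fun i _ => HasDerivAt.fun_sum fun j _ => hterm i j).congr_deriv ?_
  simp only [trace, diag_apply, mul_apply (M := M), add_apply, mul_diagonal, diagonal_mul,
    map_sum, Finset.sum_add_distrib]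
  rw [add_comm]
  congr 1
  refine Finset.sum_congr rfl fun i _ => Finset.sum_congr rfl fun j _ => ?_
  rw [show M i j * ((c' j : 𝕜) * A j i + A j i * c' i) = ((c' i + c' j : ℝ) : 𝕜) * (M i j * A j i)
    by push_cast; ring, RCLike.re_ofReal_mul]

variable (ι 𝕜) in
def elliptope : Set (Matrix ι ι 𝕜) := {X | X.PosSemidef ∧ ∀ i, X i i = 1}

lemma diagonal_mul_add_smul_vecMulVec_mul_diagonal_mem_elliptope {X : Matrix ι ι 𝕜}
    (hX : X ∈ elliptope ι 𝕜) (v : ι → 𝕜) {t : ℝ} (ht : 0 ≤ t) :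
    diagonal (fun i => (((√(1 + t * ‖v i‖ ^ 2))⁻¹ : ℝ) : 𝕜)) * (X + t • vecMulVec v (star v)) *
      diagonal (fun i => (((√(1 + t * ‖v i‖ ^ 2))⁻¹ : ℝ) : 𝕜)) ∈ elliptope ι 𝕜 := by
  have hZ := hX.1.add ((posSemidef_vecMulVec_self_star v).smul ht)
  refine ⟨hZ.diagonal_ofReal_mul_mul_diagonal_ofReal _, fun i => ?_⟩
  have hpos : 0 < 1 + t * ‖v i‖ ^ 2 := by positivity
  have hentry : (X + t • vecMulVec v (star v)) i i = ((1 + t * ‖v i‖ ^ 2 : ℝ) : 𝕜) := by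
    simp [hX.2 i, vecMulVec_apply, RCLike.mul_conj, RCLike.real_smul_eq_coe_mul]
  simp only [diagonal_mul, mul_diagonal, hentry]
  rw [← RCLike.ofReal_mul, ← RCLike.ofReal_mul, mul_comm, ← mul_assoc, ← mul_inv,
    Real.mul_self_sqrt hpos.le, inv_mul_cancel₀ hpos.ne', RCLike.ofReal_one]

lemma re_trace_mul_diagonal_mul_add_mul_diagonal {M X : Matrix ι ι 𝕜} (hM : M.IsHermitian)
    (hX : X.IsHermitian) (w : ι → ℝ) :
    RCLike.re (M * (diagonal (fun i => (w i : 𝕜)) * X + X * diagonal (fun i => (w i : 𝕜)))).trace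
      = 2 * ∑ i, w i * RCLike.re ((M * X) i i) := by
  have hXM : ∀ i, RCLike.re ((X * M) i i) = RCLike.re ((M * X) i i) := fun i => by
    rw [show X * M = (M * X)ᴴ by rw [conjTranspose_mul, hM.eq, hX.eq], conjTranspose_apply,
      RCLike.star_def, RCLike.conj_re]
  rw [Matrix.mul_add, trace_add, ← Matrix.mul_assoc, trace_mul_cycle, ← Matrix.mul_assoc]
  simp only [trace, diag_apply, mul_diagonal, map_add, map_sum,
    RCLike.re_ofReal_mul, mul_comm _ (w _ : 𝕜), hXM, Finset.mul_sum]
  rw [← Finset.sum_add_distrib]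
  exact Finset.sum_congr rfl fun i _ => by ring

lemma re_star_dotProduct_sub_diagonal_mulVec (M : Matrix ι ι 𝕜) (d : ι → ℝ) (v : ι → 𝕜) :
    RCLike.re (star v ⬝ᵥ (M - diagonal (fun i => (d i : 𝕜))) *ᵥ v)
      = RCLike.re (star v ⬝ᵥ M *ᵥ v) - ∑ i, d i * ‖v i‖ ^ 2 := by
  rw [sub_mulVec, dotProduct_sub, map_sub]
  congr 1
  simp only [dotProduct, mulVec_diagonal, map_sum, Pi.star_apply]
  refine Finset.sum_congr rfl fun i _ => ?_
  rw [mul_left_comm, RCLike.star_def, RCLike.conj_mul, ← RCLike.ofReal_pow, ← RCLike.ofReal_mul,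
    RCLike.ofReal_re]

theorem posSemidef_sub_diagonal_of_isMinOn {M X : Matrix ι ι 𝕜} (hM : M.IsHermitian)
    (hX : X ∈ elliptope ι 𝕜)
    (hmin : IsMinOn (fun Y => RCLike.re (M * Y).trace) (elliptope ι 𝕜) X) :
    (M - diagonal (fun i => (RCLike.re ((M * X) i i) : 𝕜))).PosSemidef := by
  refine .of_re_dotProduct_mulVec_nonneg (hM.sub (isHermitian_diagonal_of_self_adjoint _ ?_))
    fun v => ?_
  · ext i; exact RCLike.conj_ofReal _
  have hderiv := hasDerivAt_re_trace_mul_diagonal_mul_mul_diagonal M X (vecMulVec v (star v))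
    (fun i => hasDerivAt_inv_sqrt_one_add_mul (‖v i‖ ^ 2)) (fun i => by simp)
  have hmono := hderiv.nonneg_of_forall_lt_le fun t ht => by
    simpa using hmin (diagonal_mul_add_smul_vecMulVec_mul_diagonal_mem_elliptope hX v ht.le)
  rw [re_trace_mul_vecMulVec_star, re_trace_mul_diagonal_mul_add_mul_diagonal hM hX.1.1] at hmono
  have hsum : 2 * ∑ i, -‖v i‖ ^ 2 / 2 * RCLike.re ((M * X) i i)
      = -∑ i, RCLike.re ((M * X) i i) * ‖v i‖ ^ 2 := by
    rw [Finset.mul_sum, ← Finset.sum_neg_distrib]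
    exact Finset.sum_congr rfl fun i _ => by ring
  rw [re_star_dotProduct_sub_diagonal_mulVec]
  linarith

lemma re_trace_mul_eq_sum_add_re_trace_mul {M S X : Matrix ι ι 𝕜} {d : ι → ℝ}
    (hMS : M - S = diagonal (fun i => (d i : 𝕜))) (hX : ∀ i, X i i = 1) :
    RCLike.re (M * X).trace = ∑ i, d i + RCLike.re (S * X).trace := by
  rw [← sub_add_cancel M S, hMS, Matrix.add_mul, trace_add, map_add]
  simp [trace, hX, map_sum]

theorem exists_dual_certificate_of_isMinOn {M X : Matrix ι ι 𝕜} (hM : M.IsHermitian)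
    (hX : X ∈ elliptope ι 𝕜)
    (hmin : IsMinOn (fun Y => RCLike.re (M * Y).trace) (elliptope ι 𝕜) X) :
    ∃ S : Matrix ι ι 𝕜, S.PosSemidef ∧ S * X = 0 ∧
      ∃ d : ι → ℝ, M - S = diagonal (fun i => (d i : 𝕜)) := by
  have hS := posSemidef_sub_diagonal_of_isMinOn hM hX hmin
  refine ⟨_, hS, hS.mul_eq_zero_of_trace_mul_eq_zero hX.1 ?_, _, sub_sub_cancel _ _⟩
  have hre := re_trace_mul_eq_sum_add_re_trace_mul
    (sub_sub_cancel M (diagonal fun i => (RCLike.re ((M * X) i i) : 𝕜))) hX.2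
  have htrace : RCLike.re (M * X).trace = ∑ i, RCLike.re ((M * X) i i) := map_sum _ _ _
  refine RCLike.ext ?_ ?_ <;> rw [map_zero]
  · linarith
  · exact (RCLike.nonneg_iff.mp (hS.trace_mul_nonneg hX.1)).2

theorem isMinOn_of_dual_certificate {M S X : Matrix ι ι 𝕜} {d : ι → ℝ} (hS : S.PosSemidef)
    (hSX : S * X = 0) (hMS : M - S = diagonal (fun i => (d i : 𝕜))) (hX : ∀ i, X i i = 1) :
    IsMinOn (fun Y => RCLike.re (M * Y).trace) (elliptope ι 𝕜) X := by
  refine isMinOn_iff.mpr fun Y hY => ?_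
  simp only [re_trace_mul_eq_sum_add_re_trace_mul hMS hX,
    re_trace_mul_eq_sum_add_re_trace_mul hMS hY.2, hSX, trace_zero, map_zero, add_zero]
  linarith [(RCLike.nonneg_iff.mp (hS.trace_mul_nonneg hY.1)).1]

end Matrix

theorem stmt1_general {n : ℕ} (M Xhat : Matrix (Fin n) (Fin n) ℂ)
    (hM : M.IsHermitian) :
    (Xhat.PosSemidef ∧ (∀ i, Xhat i i = 1) ∧
      ∀ X : Matrix (Fin n) (Fin n) ℂ, X.PosSemidef → (∀ i, X i i = 1) →
        ((M * Xhat).trace).re ≤ ((M * X).trace).re)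
    ↔
    (∃ S : Matrix (Fin n) (Fin n) ℂ, S.IsHermitian ∧
      (∀ i, Xhat i i = 1) ∧
      Xhat.PosSemidef ∧
      S * Xhat = 0 ∧
      (∃ d : Fin n → ℝ, M - S = Matrix.diagonal (fun i => (d i : ℂ))) ∧
      S.PosSemidef) := by
  constructor
  · rintro ⟨hpsd, hdiag, hmin⟩
    obtain ⟨S, hS, hSX, hMS⟩ := exists_dual_certificate_of_isMinOn hM ⟨hpsd, hdiag⟩
      (isMinOn_iff.mpr fun X hX => hmin X hX.1 hX.2)
    exact ⟨S, hS.1, hdiag, hpsd, hSX, hMS, hS⟩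
  · rintro ⟨S, -, hdiag, hpsd, hSX, ⟨d, hMS⟩, hS⟩
    exact ⟨hpsd, hdiag, fun X hX hXd =>
      isMinOn_iff.mp (isMinOn_of_dual_certificate hS hSX hMS hdiag) X ⟨hX, hXd⟩⟩

/-- **Paper's Lemma 2, equivalence part.** For Hermitian `M`, a Hermitian `X̂` is a
global minimizer of `Re tr(M X)` over `{X Hermitian : X ⪰ 0, diag(X) = 𝟙}` iff there
exists a Hermitian `Ŝ` with: (1) `diag(X̂) = 𝟙`; (2) `X̂ ⪰ 0`; (3) `Ŝ X̂ = 0`;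
(4) `M − Ŝ` real diagonal; (5) `Ŝ ⪰ 0`. -/
theorem stmt1 {n : ℕ} (M Xhat : Matrix (Fin n) (Fin n) ℂ)
    (hM : M.IsHermitian) (hXhat : Xhat.IsHermitian) :
    (Xhat.PosSemidef ∧ (∀ i, Xhat i i = 1) ∧
      ∀ X : Matrix (Fin n) (Fin n) ℂ, X.PosSemidef → (∀ i, X i i = 1) →
        ((M * Xhat).trace).re ≤ ((M * X).trace).re)
    ↔
    (∃ S : Matrix (Fin n) (Fin n) ℂ, S.IsHermitian ∧
      (∀ i, Xhat i i = 1) ∧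
      Xhat.PosSemidef ∧
      S * Xhat = 0 ∧
      (∃ d : Fin n → ℝ, M - S = Matrix.diagonal (fun i => (d i : ℂ))) ∧
      S.PosSemidef) :=
  stmt1_general M Xhat hM
end

section
/- Let M ∈ ℂ^{n×n} be Hermitian and ẑ ∈ ℂ₁ⁿ satisfy Ŝ ẑ = 0, where Ŝ = M − Re(ddiag(M ẑ ẑᴴ)). If Ŝ ⪰ 0, then ẑ is a global minimizer of z ↦ zᴴ M z over ℂ₁ⁿ, and X̂ = ẑ ẑᴴ is a global minimizer of Re tr(M X) over {X Hermitian : X ⪰ 0, diag(X) = 𝟙}. Moreover, if rank(Ŝ) = n − 1, then X̂ is the unique global minimizer of the latter problem. (Paper's Lemma 3.) -/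
/-!
Write `Ŝ = M - D` with `D` the real diagonal part of `M ẑ ẑᴴ`. For every feasible `X` of (SDP)
the unit diagonal gives `Re tr(D X) = Re(ẑᴴ M ẑ)`, so `Re tr(M X) = Re tr(Ŝ X) + Re(ẑᴴ M ẑ)`.
The first summand is nonnegative because `Ŝ ⪰ 0` and `X ⪰ 0`, and vanishes at `X̂ = ẑ ẑᴴ` since
`Ŝ ẑ = 0`; rank-one matrices `z zᴴ` with `z ∈ ℂ₁ⁿ` are feasible, which covers (QP). If
`Re tr(Ŝ X) = 0` then `Ŝ X = 0`, so the columns of `X` lie in `ker Ŝ`, which is spanned by `ẑ` when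
`rank Ŝ = n - 1`; the unit diagonal then forces `X = X̂`.
-/

open Matrix Complex
open scoped ComplexOrder

noncomputable section

namespace Matrix

section RCLike

variable {ι 𝕜 : Type*} [RCLike 𝕜]

lemma vecMulVec_self_star_apply_self {z : ι → 𝕜} {i : ι} (hz : ‖z i‖ = 1) :
    vecMulVec z (star z) i i = 1 := by
  rw [vecMulVec_apply, Pi.star_apply, RCLike.star_def, RCLike.mul_conj, hz]
  norm_num

variable [Fintype ι] {S X : Matrix ι ι 𝕜}

lemma PosSemidef.exists_eq_conjTranspose_mul_self (hS : S.PosSemidef) :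
    ∃ B : Matrix ι ι 𝕜, S = Bᴴ * B := by
  classical
  open scoped MatrixOrder in
  exact CStarAlgebra.nonneg_iff_eq_star_mul_self.mp hS.nonneg

lemma trace_conjTranspose_mul_self_mul_conjTranspose_mul_self (C B : Matrix ι ι 𝕜) :
    (Cᴴ * C * (Bᴴ * B)).trace = (C * Bᴴ * (C * Bᴴ)ᴴ).trace := by
  rw [conjTranspose_mul, conjTranspose_conjTranspose, Matrix.mul_assoc, trace_mul_comm]
  simp only [Matrix.mul_assoc]

lemma PosSemidef.trace_mul_nonneg_s3 (hS : S.PosSemidef) (hX : X.PosSemidef) :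
    0 ≤ (S * X).trace := by
  obtain ⟨C, rfl⟩ := hS.exists_eq_conjTranspose_mul_self
  obtain ⟨B, rfl⟩ := hX.exists_eq_conjTranspose_mul_self
  rw [trace_conjTranspose_mul_self_mul_conjTranspose_mul_self]
  exact (posSemidef_self_mul_conjTranspose _).trace_nonneg

lemma PosSemidef.trace_mul_eq_zero_iff (hS : S.PosSemidef) (hX : X.PosSemidef) :
    (S * X).trace = 0 ↔ S * X = 0 := by
  refine ⟨fun h => ?_, fun h => by rw [h, trace_zero]⟩
  obtain ⟨C, rfl⟩ := hS.exists_eq_conjTranspose_mul_self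
  obtain ⟨B, rfl⟩ := hX.exists_eq_conjTranspose_mul_self
  rw [trace_conjTranspose_mul_self_mul_conjTranspose_mul_self,
    trace_mul_conjTranspose_self_eq_zero_iff] at h
  rw [show Cᴴ * C * (Bᴴ * B) = Cᴴ * (C * Bᴴ) * B by simp only [Matrix.mul_assoc], h,
    Matrix.mul_zero, Matrix.zero_mul]

lemma trace_mul_vecMulVec_self_star (M : Matrix ι ι 𝕜) (z : ι → 𝕜) :
    (M * vecMulVec z (star z)).trace = star z ⬝ᵥ M *ᵥ z := by
  rw [mul_vecMulVec, trace_vecMulVec, dotProduct_comm]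

end RCLike

section Field

variable {ι K : Type*} [Fintype ι] [Field K] {S : Matrix ι ι K} {z : ι → K}

lemma ker_mulVecLin_eq_span_singleton (hrank : S.rank = Fintype.card ι - 1)
    (hSz : S *ᵥ z = 0) (hz : z ≠ 0) : LinearMap.ker S.mulVecLin = K ∙ z := by
  have hfinrank : Module.finrank K (LinearMap.ker S.mulVecLin) = 1 := by
    have := S.mulVecLin.finrank_range_add_finrank_ker
    have hcard : 0 < Fintype.card ι := Fintype.card_pos_iff.mpr (Function.ne_iff.mp hz).nonempty
    rw [Module.finrank_fintype_fun_eq_card] at this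
    change S.rank + _ = _ at this
    omega
  refine (Submodule.eq_of_le_of_finrank_le ?_ ?_).symm
  · rwa [Submodule.span_le, Set.singleton_subset_iff, SetLike.mem_coe, LinearMap.mem_ker,
      mulVecLin_apply]
  · rw [hfinrank, finrank_span_singleton hz]

lemma exists_eq_vecMulVec_of_mul_eq_zero {X : Matrix ι ι K}
    (hrank : S.rank = Fintype.card ι - 1) (hSz : S *ᵥ z = 0) (hz : z ≠ 0) (hSX : S * X = 0) :
    ∃ c : ι → K, X = vecMulVec z c := by
  classical
  have hcol : ∀ j, ∃ c : K, c • z = X.col j := fun j => by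
    rw [← Submodule.mem_span_singleton, ← ker_mulVecLin_eq_span_singleton hrank hSz hz,
      LinearMap.mem_ker, mulVecLin_apply, ← mulVec_single_one, mulVec_mulVec, hSX, zero_mulVec]
  choose c hc using hcol
  refine ⟨c, ext fun i j => ?_⟩
  rw [vecMulVec_apply, mul_comm, ← smul_eq_mul, ← Pi.smul_apply, hc j, col_apply]

end Field

lemma eq_vecMulVec_self_star_of_mul_eq_zero {ι 𝕜 : Type*} [Fintype ι] [RCLike 𝕜]
    {S X : Matrix ι ι 𝕜} {z : ι → 𝕜} (hz : ∀ i, ‖z i‖ = 1) (hX : ∀ i, X i i = 1)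
    (hrank : S.rank = Fintype.card ι - 1) (hSz : S *ᵥ z = 0) (hSX : S * X = 0) :
    X = vecMulVec z (star z) := by
  cases isEmpty_or_nonempty ι
  · exact Subsingleton.elim _ _
  have hz_ne : ∀ i, z i ≠ 0 := fun i h => by simpa [h] using hz i
  obtain ⟨c, rfl⟩ := exists_eq_vecMulVec_of_mul_eq_zero hrank hSz
    (Function.ne_iff.mpr ⟨Classical.arbitrary ι, hz_ne _⟩) hSX
  have hc : c = star z := funext fun i => mul_left_cancel₀ (hz_ne i) <| by
    rw [← vecMulVec_apply, hX, ← vecMulVec_apply, vecMulVec_self_star_apply_self (hz i)]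
  rw [hc]

end Matrix

lemma re_trace_mul_eq_re_trace_certMat_mul_add {n : ℕ} (M : Matrix (Fin n) (Fin n) ℂ)
    (z : Fin n → ℂ) {X : Matrix (Fin n) (Fin n) ℂ} (hX : ∀ i, X i i = 1) :
    (M * X).trace.re = (certMat M z * X).trace.re + (star z ⬝ᵥ M *ᵥ z).re := by
  have hdiag : (diagonal (fun i => (((M *ᵥ z) i * star (z i)).re : ℂ)) * X).trace.re =
      (star z ⬝ᵥ M *ᵥ z).re := by
    simp [trace, diagonal_mul, hX, dotProduct, Complex.re_sum, mul_comm]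
  rw [certMat, Matrix.sub_mul, trace_sub, Complex.sub_re, hdiag, sub_add_cancel]

theorem stmt3_general {n : ℕ} (M : Matrix (Fin n) (Fin n) ℂ)
    (zhat : Fin n → ℂ) (hzhat : ∀ i, ‖zhat i‖ = 1)
    (hcrit : (certMat M zhat).mulVec zhat = 0)
    (hpsd : (certMat M zhat).PosSemidef) :
    (∀ z : Fin n → ℂ, (∀ i, ‖z i‖ = 1) →
      (star zhat ⬝ᵥ M.mulVec zhat).re ≤ (star z ⬝ᵥ M.mulVec z).re) ∧
    (∀ X : Matrix (Fin n) (Fin n) ℂ, X.PosSemidef → (∀ i, X i i = 1) →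
      ((M * Matrix.vecMulVec zhat (star zhat)).trace).re ≤ ((M * X).trace).re) ∧
    ((certMat M zhat).rank = n - 1 →
      ∀ X : Matrix (Fin n) (Fin n) ℂ, X.PosSemidef → (∀ i, X i i = 1) →
        ((M * X).trace).re = ((M * Matrix.vecMulVec zhat (star zhat)).trace).re →
        X = Matrix.vecMulVec zhat (star zhat)) := by
  set S := certMat M zhat
  have hSZ : S * vecMulVec zhat (star zhat) = 0 := by rw [mul_vecMulVec, hcrit, zero_vecMulVec]
  have hZdiag : ∀ i, vecMulVec zhat (star zhat) i i = 1 :=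
    fun i => vecMulVec_self_star_apply_self (hzhat i)
  have hgap : ∀ X : Matrix (Fin n) (Fin n) ℂ, (∀ i, X i i = 1) →
      (M * X).trace.re = (S * X).trace.re + (M * vecMulVec zhat (star zhat)).trace.re := by
    intro X hX
    rw [re_trace_mul_eq_re_trace_certMat_mul_add M zhat hX,
      re_trace_mul_eq_re_trace_certMat_mul_add M zhat hZdiag, hSZ, trace_zero, Complex.zero_re,
      zero_add]
  have hsdp : ∀ X : Matrix (Fin n) (Fin n) ℂ, X.PosSemidef → (∀ i, X i i = 1) →
      (M * vecMulVec zhat (star zhat)).trace.re ≤ (M * X).trace.re := fun X hX hXd => by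
    rw [hgap X hXd]
    linarith [(Complex.nonneg_iff.mp (hpsd.trace_mul_nonneg_s3 hX)).1]
  refine ⟨fun z hz => ?_, hsdp, fun hrank X hX hXd heq => ?_⟩
  · rw [← trace_mul_vecMulVec_self_star, ← trace_mul_vecMulVec_self_star]
    exact hsdp _ (posSemidef_vecMulVec_self_star z) fun i => vecMulVec_self_star_apply_self (hz i)
  · have htrace : (S * X).trace = 0 :=
      Complex.ext (by rw [Complex.zero_re]; linarith [hgap X hXd])
        (Complex.nonneg_iff.mp (hpsd.trace_mul_nonneg_s3 hX)).2.symm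
    exact eq_vecMulVec_self_star_of_mul_eq_zero hzhat hXd (by simpa using hrank) hcrit
      ((hpsd.trace_mul_eq_zero_iff hX).mp htrace)

/-- **Paper's Lemma 3.** If `ẑ ∈ ℂ₁ⁿ` satisfies `Ŝ ẑ = 0` with
`Ŝ = M − Re(ddiag(M ẑ ẑᴴ))` and `Ŝ ⪰ 0`, then `ẑ` is a global minimizer of (QP) and
`X̂ = ẑ ẑᴴ` is a global minimizer of (SDP); if moreover `rank(Ŝ) = n − 1`, then `X̂`
is the unique global minimizer of (SDP). -/
theorem stmt3 {n : ℕ} (M : Matrix (Fin n) (Fin n) ℂ) (hM : M.IsHermitian)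
    (zhat : Fin n → ℂ) (hzhat : ∀ i, ‖zhat i‖ = 1)
    (hcrit : (certMat M zhat).mulVec zhat = 0)
    (hpsd : (certMat M zhat).PosSemidef) :
    (∀ z : Fin n → ℂ, (∀ i, ‖z i‖ = 1) →
      (star zhat ⬝ᵥ M.mulVec zhat).re ≤ (star z ⬝ᵥ M.mulVec z).re) ∧
    (∀ X : Matrix (Fin n) (Fin n) ℂ, X.PosSemidef → (∀ i, X i i = 1) →
      ((M * Matrix.vecMulVec zhat (star zhat)).trace).re ≤ ((M * X).trace).re) ∧
    ((certMat M zhat).rank = n - 1 →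
      ∀ X : Matrix (Fin n) (Fin n) ℂ, X.PosSemidef → (∀ i, X i i = 1) →
        ((M * X).trace).re = ((M * Matrix.vecMulVec zhat (star zhat)).trace).re →
        X = Matrix.vecMulVec zhat (star zhat)) :=
  stmt3_general M zhat hzhat hcrit hpsd
end
end

section
/- Let M̄ ∈ ℂ^{n×n} be Hermitian positive semidefinite, z̄ ∈ ℂ₁ⁿ with M̄ z̄ = 0, and λ > 0 a constant such that Re(xᴴ M̄ x) ≥ λ ‖x‖² for every x ∈ ℂⁿ with z̄ᴴ x = 0. Let M̃ ∈ ℂ^{n×n} be Hermitian and let ẑ ∈ ℂ₁ⁿ be a global minimizer of z ↦ zᴴ M̃ z over ℂ₁ⁿ. Then d(z̄, ẑ) ≤ 2 √( n ‖M̃ − M̄‖₂ / λ ), where d(z̄, ẑ) = inf over θ ∈ ℝ of ‖ẑ − e^{iθ} z̄‖. (Paper's Proposition 6 / Proposition B.E.) -/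
/-!
Split `ẑ = a z̄ + x` with `x ⟂ z̄`. Since `M̄ z̄ = 0`, the quadratic form of `M̄` at `ẑ` equals the
one at `x`, so the spectral gap gives `λ ‖x‖² ≤ ẑᴴ M̄ ẑ`. Comparing with `M̃` and using that `ẑ`
beats `z̄` for `M̃` while `z̄ᴴ M̄ z̄ = 0`, one gets `ẑᴴ M̄ ẑ ≤ ‖M̃ - M̄‖ (‖ẑ‖² + ‖z̄‖²) = 2n ‖M̃ - M̄‖`.
Finally, as `‖ẑ‖ = ‖z̄‖`, rotating `z̄` by the phase of `a` brings it within `√2 ‖x‖` of `ẑ`.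
-/

open Matrix Complex
open scoped ComplexOrder Matrix.Norms.L2Operator

noncomputable section

/-- The Euclidean norm of a complex vector. -/
def enorm' {n : ℕ} (x : Fin n → ℂ) : ℝ :=
  Real.sqrt (∑ i, Complex.normSq (x i))

open scoped InnerProductSpace

section Geometry

variable {E : Type*} [NormedAddCommGroup E] [InnerProductSpace ℂ E]

theorem exists_inner_sub_smul_eq_zero (u w : E) : ∃ a : ℂ, ⟪u, w - a • u⟫_ℂ = 0 := by
  obtain ⟨a, ha⟩ := Submodule.mem_span_singleton.mp ((ℂ ∙ u).starProjection_apply_mem w)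
  refine ⟨a, ?_⟩
  rw [ha, ← inner_conj_symm,
    Submodule.starProjection_inner_eq_zero _ _ (Submodule.mem_span_singleton_self u), map_zero]

theorem exists_norm_sub_exp_smul_sq_le {u w : E} (hnorm : ‖w‖ = ‖u‖) {a : ℂ}
    (horth : ⟪u, w - a • u⟫_ℂ = 0) :
    ∃ θ : ℝ, ‖w - exp (θ * I) • u‖ ^ 2 ≤ 2 * ‖w - a • u‖ ^ 2 := by
  refine ⟨arg a, ?_⟩
  set x := w - a • u
  have hpyth (b : ℂ) : ‖b • u + x‖ ^ 2 = ‖b‖ ^ 2 * ‖u‖ ^ 2 + ‖x‖ ^ 2 := by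
    rw [norm_add_sq (𝕜 := ℂ), inner_smul_left, horth, mul_zero, map_zero, mul_zero, add_zero,
      norm_smul, mul_pow]
  have hw : ‖u‖ ^ 2 = ‖a‖ ^ 2 * ‖u‖ ^ 2 + ‖x‖ ^ 2 := by
    rw [← hpyth, add_sub_cancel, hnorm]
  have hphase : ‖a - exp (arg a * I)‖ = |‖a‖ - 1| := by
    calc _ = ‖((‖a‖ - 1 : ℝ) : ℂ) * exp (arg a * I)‖ := by
          rw [ofReal_sub, ofReal_one, sub_one_mul, norm_mul_exp_arg_mul_I]
      _ = _ := by rw [norm_mul, norm_exp_ofReal_mul_I, mul_one, norm_real, Real.norm_eq_abs]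
  have hdiff : w - exp (arg a * I) • u = (a - exp (arg a * I)) • u + x := by
    simp only [x, sub_smul]; abel
  rw [hdiff, hpyth, hphase, sq_abs]
  -- with `r = ‖a‖ ≤ 1` (forced by `hw` unless `u = 0`): `(r - 1)² ≤ 1 - r²`
  nlinarith [norm_nonneg a, sq_nonneg ‖u‖, sq_nonneg ‖x‖, mul_nonneg (norm_nonneg a) (sq_nonneg ‖u‖)]

end Geometry

section QuadraticForm

variable {ι : Type*} [Fintype ι]

theorem Matrix.IsHermitian.star_sub_smul_dotProduct_mulVec_sub_smul {R : Type*} [CommRing R]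
    [StarRing R] {M : Matrix ι ι R} (hM : M.IsHermitian) {z : ι → R} (hz : M *ᵥ z = 0)
    (v : ι → R) (a : R) :
    star (v - a • z) ⬝ᵥ M *ᵥ (v - a • z) = star v ⬝ᵥ M *ᵥ v := by
  have hzM : star z ᵥ* M = 0 := by
    simpa only [star_mulVec, hM.eq, star_zero] using congrArg star hz
  rw [mulVec_sub, mulVec_smul, hz, smul_zero, sub_zero, star_sub, star_smul, sub_dotProduct,
    smul_dotProduct, dotProduct_mulVec (star z), hzM, zero_dotProduct, smul_zero, sub_zero]

theorem sum_normSq_eq_norm_toLp_sq (v : ι → ℂ) :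
    ∑ i, normSq (v i) = ‖WithLp.toLp 2 v‖ ^ 2 := by
  simp only [EuclideanSpace.norm_sq_eq, normSq_eq_norm_sq]

theorem norm_toLp_sq_of_forall_norm_eq_one {z : ι → ℂ} (hz : ∀ i, ‖z i‖ = 1) :
    ‖WithLp.toLp 2 z‖ ^ 2 = Fintype.card ι := by
  simp [EuclideanSpace.norm_sq_eq, hz]

variable [DecidableEq ι]

theorem abs_re_star_dotProduct_mulVec_le {𝕜 : Type*} [RCLike 𝕜] (A : Matrix ι ι 𝕜)
    (v : ι → 𝕜) : |RCLike.re (star v ⬝ᵥ A *ᵥ v)| ≤ ‖A‖ * ‖WithLp.toLp 2 v‖ ^ 2 := by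
  have hinner : star v ⬝ᵥ A *ᵥ v = ⟪WithLp.toLp 2 v, WithLp.toLp 2 (A *ᵥ v)⟫_𝕜 := by
    rw [EuclideanSpace.inner_toLp_toLp, dotProduct_comm]
  calc |RCLike.re (star v ⬝ᵥ A *ᵥ v)| ≤ ‖star v ⬝ᵥ A *ᵥ v‖ := RCLike.abs_re_le_norm _
    _ ≤ ‖WithLp.toLp 2 v‖ * (‖A‖ * ‖WithLp.toLp 2 v‖) := by
      rw [hinner]
      exact (norm_inner_le_norm _ _).trans (by gcongr; exact A.l2_opNorm_mulVec _)
    _ = ‖A‖ * ‖WithLp.toLp 2 v‖ ^ 2 := by ring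

theorem re_star_dotProduct_mulVec_le_of_mulVec_eq_zero {𝕜 : Type*} [RCLike 𝕜]
    {M M' : Matrix ι ι 𝕜} {z w : ι → 𝕜} (hz : M *ᵥ z = 0)
    (hle : RCLike.re (star w ⬝ᵥ M' *ᵥ w) ≤ RCLike.re (star z ⬝ᵥ M' *ᵥ z)) :
    RCLike.re (star w ⬝ᵥ M *ᵥ w) ≤
      ‖M' - M‖ * (‖WithLp.toLp 2 w‖ ^ 2 + ‖WithLp.toLp 2 z‖ ^ 2) := by
  have hsplit (v : ι → 𝕜) :
      star v ⬝ᵥ M *ᵥ v = star v ⬝ᵥ M' *ᵥ v - star v ⬝ᵥ (M' - M) *ᵥ v := by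
    rw [sub_mulVec, dotProduct_sub, sub_sub_cancel]
  have hz' : star z ⬝ᵥ M' *ᵥ z = star z ⬝ᵥ (M' - M) *ᵥ z := by
    rw [sub_mulVec, dotProduct_sub, hz, dotProduct_zero, sub_zero]
  have hw_bound := abs_le.mp (abs_re_star_dotProduct_mulVec_le (M' - M) w)
  have hz_bound := abs_le.mp (abs_re_star_dotProduct_mulVec_le (M' - M) z)
  rw [hz'] at hle
  rw [hsplit, map_sub]
  linarith [hw_bound.1, hz_bound.2]

theorem mul_norm_toLp_sub_smul_sq_le {M M' : Matrix ι ι ℂ} (hM : M.IsHermitian) {z w : ι → ℂ}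
    (hz : M *ᵥ z = 0) {lam : ℝ}
    (hgap : ∀ x : ι → ℂ, star z ⬝ᵥ x = 0 → lam * ∑ i, normSq (x i) ≤ (star x ⬝ᵥ M *ᵥ x).re)
    (hle : (star w ⬝ᵥ M' *ᵥ w).re ≤ (star z ⬝ᵥ M' *ᵥ z).re) {a : ℂ}
    (horth : star z ⬝ᵥ (w - a • z) = 0) :
    lam * ‖WithLp.toLp 2 (w - a • z)‖ ^ 2 ≤
      ‖M' - M‖ * (‖WithLp.toLp 2 w‖ ^ 2 + ‖WithLp.toLp 2 z‖ ^ 2) :=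
  calc lam * ‖WithLp.toLp 2 (w - a • z)‖ ^ 2
      = lam * ∑ i, normSq ((w - a • z) i) := by rw [sum_normSq_eq_norm_toLp_sq]
    _ ≤ (star (w - a • z) ⬝ᵥ M *ᵥ (w - a • z)).re := hgap _ horth
    _ = (star w ⬝ᵥ M *ᵥ w).re := by rw [hM.star_sub_smul_dotProduct_mulVec_sub_smul hz]
    _ ≤ _ := re_star_dotProduct_mulVec_le_of_mulVec_eq_zero hz hle

end QuadraticForm

theorem enorm'_eq_norm_toLp {n : ℕ} (v : Fin n → ℂ) : enorm' v = ‖WithLp.toLp 2 v‖ := by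
  rw [enorm', sum_normSq_eq_norm_toLp_sq, Real.sqrt_sq (norm_nonneg _)]

theorem stmt8_general {n : ℕ} (Mbar Mt : Matrix (Fin n) (Fin n) ℂ)
    (hMbar : Mbar.PosSemidef)
    (zbar : Fin n → ℂ) (hzbar : ∀ i, ‖zbar i‖ = 1)
    (hker : Mbar.mulVec zbar = 0)
    (lam : ℝ) (hlam : 0 < lam)
    (hgap : ∀ x : Fin n → ℂ, star zbar ⬝ᵥ x = 0 →
      lam * (∑ i, Complex.normSq (x i)) ≤ (star x ⬝ᵥ Mbar.mulVec x).re)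
    (zhat : Fin n → ℂ) (hzhat : ∀ i, ‖zhat i‖ = 1)
    (hopt : ∀ z : Fin n → ℂ, (∀ i, ‖z i‖ = 1) →
      (star zhat ⬝ᵥ Mt.mulVec zhat).re ≤ (star z ⬝ᵥ Mt.mulVec z).re) :
    (⨅ θ : ℝ, enorm' (zhat - fun i => Complex.exp (θ * Complex.I) * zbar i)) ≤
      2 * Real.sqrt (n * ‖Mt - Mbar‖ / lam) := by
  set Z := WithLp.toLp 2 zbar
  set W := WithLp.toLp 2 zhat
  have hZ : ‖Z‖ ^ 2 = n := by simpa using norm_toLp_sq_of_forall_norm_eq_one hzbar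
  have hW : ‖W‖ ^ 2 = n := by simpa using norm_toLp_sq_of_forall_norm_eq_one hzhat
  obtain ⟨a, horth⟩ := exists_inner_sub_smul_eq_zero Z W
  obtain ⟨θ, hθ⟩ := exists_norm_sub_exp_smul_sq_le
    ((sq_eq_sq₀ (norm_nonneg _) (norm_nonneg _)).mp (hW.trans hZ.symm)) horth
  have hx : ‖W - a • Z‖ ^ 2 ≤ ‖Mt - Mbar‖ * (n + n) / lam := by
    have h := mul_norm_toLp_sub_smul_sq_le hMbar.isHermitian hker hgap (hopt zbar hzbar)
      (by rw [dotProduct_comm]; exact horth)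
    rw [hW, hZ] at h
    rwa [le_div_iff₀' hlam]
  have hdist : ‖W - exp (θ * I) • Z‖ ^ 2 ≤ 2 ^ 2 * (n * ‖Mt - Mbar‖ / lam) := by
    linarith [hθ, hx, show ‖Mt - Mbar‖ * (n + n) / lam = 2 * (n * ‖Mt - Mbar‖ / lam) by ring]
  have hbdd : BddBelow (Set.range fun θ : ℝ => enorm' (zhat - fun i => exp (θ * I) * zbar i)) :=
    ⟨0, by rintro _ ⟨θ, rfl⟩; exact Real.sqrt_nonneg _⟩
  refine (ciInf_le hbdd θ).trans ?_
  rw [enorm'_eq_norm_toLp, ← Real.sqrt_sq (norm_nonneg _), ← Real.sqrt_sq zero_le_two,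
    ← Real.sqrt_mul (sq_nonneg 2)]
  exact Real.sqrt_le_sqrt hdist

/-- **Paper's Proposition 6 (Proposition B.E).** Let `M̄ ⪰ 0` with `M̄ z̄ = 0` for
`z̄ ∈ ℂ₁ⁿ`, and `λ > 0` with `Re(xᴴ M̄ x) ≥ λ ‖x‖²` for every `x ⟂ z̄`. If `ẑ ∈ ℂ₁ⁿ`
is a global minimizer of `z ↦ zᴴ M̃ z` over `ℂ₁ⁿ` (`M̃` Hermitian), then
`d(z̄, ẑ) = inf_θ ‖ẑ − e^{iθ} z̄‖ ≤ 2 √(n ‖M̃ − M̄‖₂ / λ)`. -/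
theorem stmt8 {n : ℕ} (Mbar Mt : Matrix (Fin n) (Fin n) ℂ)
    (hMbar : Mbar.PosSemidef) (hMt : Mt.IsHermitian)
    (zbar : Fin n → ℂ) (hzbar : ∀ i, ‖zbar i‖ = 1)
    (hker : Mbar.mulVec zbar = 0)
    (lam : ℝ) (hlam : 0 < lam)
    (hgap : ∀ x : Fin n → ℂ, star zbar ⬝ᵥ x = 0 →
      lam * (∑ i, Complex.normSq (x i)) ≤ (star x ⬝ᵥ Mbar.mulVec x).re)
    (zhat : Fin n → ℂ) (hzhat : ∀ i, ‖zhat i‖ = 1)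
    (hopt : ∀ z : Fin n → ℂ, (∀ i, ‖z i‖ = 1) →
      (star zhat ⬝ᵥ Mt.mulVec zhat).re ≤ (star z ⬝ᵥ Mt.mulVec z).re) :
    (⨅ θ : ℝ, enorm' (zhat - fun i => Complex.exp (θ * Complex.I) * zbar i)) ≤
      2 * Real.sqrt (n * ‖Mt - Mbar‖ / lam) :=
  stmt8_general Mbar Mt hMbar zbar hzbar hker lam hlam hgap zhat hzhat hopt
end
end

section
/- Let M̄ ∈ ℂ^{n×n} be Hermitian positive semidefinite, z̄ ∈ ℂ₁ⁿ with M̄ z̄ = 0, and λ ≥ 0 such that Re(xᴴ M̄ x) ≥ λ ‖x‖² for every x ∈ ℂⁿ with z̄ᴴ x = 0. Then for every ẑ ∈ ℂ₁ⁿ, one has ẑᴴ M̄ ẑ ≥ λ ( n − |z̄ᴴ ẑ| ). -/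
/-!
Project `ẑ` orthogonally to `z̄`: with `c = z̄ᴴẑ`, the vector `x = ẑ - (c / n) z̄` is
orthogonal to `z̄`, and since `M̄` is Hermitian with `M̄ z̄ = 0` it has the same quadratic
form value as `ẑ`. By Pythagoras `‖x‖² = n - |c|² / n`, which is at least `n - |c|`
because `|c| ≤ n`.
-/

open Matrix Complex
open scoped ComplexOrder

namespace Matrix

variable {ι R : Type*} [Fintype ι]

section CommRing

variable [CommRing R] [StarRing R]

theorem IsHermitian.dotProduct_mulVec_sub_smul_of_mulVec_eq_zero {M : Matrix ι ι R}
    (hM : M.IsHermitian) {v : ι → R} (hv : M *ᵥ v = 0) (w : ι → R) (a : R) :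
    star (w - a • v) ⬝ᵥ M *ᵥ (w - a • v) = star w ⬝ᵥ M *ᵥ w := by
  have hvM : star v ᵥ* M = 0 := by
    conv_lhs => rw [← hM.eq]
    rw [← star_mulVec, hv, star_zero]
  rw [mulVec_sub, mulVec_smul, hv, smul_zero, sub_zero, star_sub, star_smul, sub_dotProduct,
    smul_dotProduct, dotProduct_mulVec (star v), hvM, zero_dotProduct, smul_zero, sub_zero]

theorem star_dotProduct_self_add_smul_of_star_dotProduct_eq_zero {v x : ι → R}
    (h : star v ⬝ᵥ x = 0) (a : R) :
    star (x + a • v) ⬝ᵥ (x + a • v) = star x ⬝ᵥ x + star a * a * (star v ⬝ᵥ v) := by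
  have h' : star x ⬝ᵥ v = 0 := by rw [star_dotProduct, h, star_zero]
  simp only [star_add, star_smul, add_dotProduct, dotProduct_add, smul_dotProduct,
    dotProduct_smul, h, h', smul_eq_mul]
  ring

end CommRing

theorem star_dotProduct_sub_div_smul_eq_zero [Field R] [StarRing R] {v : ι → R}
    (hv : star v ⬝ᵥ v ≠ 0) (w : ι → R) :
    star v ⬝ᵥ (w - ((star v ⬝ᵥ w) / (star v ⬝ᵥ v)) • v) = 0 := by
  rw [dotProduct_sub, dotProduct_smul, smul_eq_mul, div_mul_cancel₀ _ hv, sub_self]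

end Matrix

section Unimodular

variable {ι : Type*} [Fintype ι] {v w : ι → ℂ}

theorem re_star_dotProduct_self (x : ι → ℂ) : (star x ⬝ᵥ x).re = ∑ i, normSq (x i) := by
  simp [dotProduct, Complex.normSq_apply, mul_comm]

theorem star_dotProduct_self_of_norm_eq_one (hv : ∀ i, ‖v i‖ = 1) :
    star v ⬝ᵥ v = Fintype.card ι := by
  simp [dotProduct, ← Complex.normSq_eq_conj_mul_self, Complex.normSq_eq_norm_sq, hv]

theorem norm_star_dotProduct_le_card (hv : ∀ i, ‖v i‖ = 1) (hw : ∀ i, ‖w i‖ = 1) :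
    ‖star v ⬝ᵥ w‖ ≤ Fintype.card ι :=
  calc ‖star v ⬝ᵥ w‖ ≤ ∑ i, ‖star (v i) * w i‖ := norm_sum_le _ _
    _ = Fintype.card ι := by simp [hv, hw]

variable [Nonempty ι]

theorem star_dotProduct_sub_smul_eq_zero_of_norm_eq_one (hv : ∀ i, ‖v i‖ = 1)
    (w : ι → ℂ) :
    star v ⬝ᵥ (w - (star v ⬝ᵥ w / Fintype.card ι) • v) = 0 := by
  have hv_sq := star_dotProduct_self_of_norm_eq_one hv
  rw [← hv_sq]
  exact star_dotProduct_sub_div_smul_eq_zero (by simp [hv_sq]) w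

theorem sum_normSq_sub_smul_of_norm_eq_one (hv : ∀ i, ‖v i‖ = 1) (hw : ∀ i, ‖w i‖ = 1) :
    ∑ i, normSq ((w - (star v ⬝ᵥ w / Fintype.card ι) • v) i) =
      Fintype.card ι - ‖star v ⬝ᵥ w‖ ^ 2 / Fintype.card ι := by
  set a := star v ⬝ᵥ w / Fintype.card ι
  have hN : (Fintype.card ι : ℝ) ≠ 0 := Nat.cast_ne_zero.mpr Fintype.card_ne_zero
  have hpyth := star_dotProduct_self_add_smul_of_star_dotProduct_eq_zero
    (star_dotProduct_sub_smul_eq_zero_of_norm_eq_one hv w) a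
  rw [sub_add_cancel, star_dotProduct_self_of_norm_eq_one hw,
    star_dotProduct_self_of_norm_eq_one hv,
    show star a * a = (normSq a : ℂ) from normSq_eq_conj_mul_self.symm] at hpyth
  rw [← re_star_dotProduct_self, eq_sub_of_add_eq hpyth.symm, ← ofReal_natCast, ← ofReal_mul,
    ← ofReal_sub, ofReal_re, normSq_div, normSq_natCast, normSq_eq_norm_sq]
  field_simp

end Unimodular

/-- If `M̄ ⪰ 0`, `M̄ z̄ = 0` for `z̄ ∈ ℂ₁ⁿ`, and `λ ≥ 0` satisfies
`Re(xᴴ M̄ x) ≥ λ ‖x‖²` for all `x ⟂ z̄`, then for every `ẑ ∈ ℂ₁ⁿ`,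
`ẑᴴ M̄ ẑ ≥ λ (n − |z̄ᴴ ẑ|)`. -/
theorem stmt13 {n : ℕ} (Mbar : Matrix (Fin n) (Fin n) ℂ)
    (hMbar : Mbar.PosSemidef)
    (zbar : Fin n → ℂ) (hzbar : ∀ i, ‖zbar i‖ = 1)
    (hker : Mbar.mulVec zbar = 0)
    (lam : ℝ) (hlam : 0 ≤ lam)
    (hgap : ∀ x : Fin n → ℂ, star zbar ⬝ᵥ x = 0 →
      lam * (∑ i, Complex.normSq (x i)) ≤ (star x ⬝ᵥ Mbar.mulVec x).re) :
    ∀ zhat : Fin n → ℂ, (∀ i, ‖zhat i‖ = 1) →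
      lam * ((n : ℝ) - ‖star zbar ⬝ᵥ zhat‖) ≤
        (star zhat ⬝ᵥ Mbar.mulVec zhat).re := by
  intro zhat hzhat
  obtain rfl | hn := n.eq_zero_or_pos
  · simp [dotProduct]
  have : Nonempty (Fin n) := ⟨⟨0, hn⟩⟩
  have hc_le : ‖star zbar ⬝ᵥ zhat‖ ≤ n := by
    simpa using norm_star_dotProduct_le_card hzbar hzhat
  set c := star zbar ⬝ᵥ zhat
  set x := zhat - (c / n) • zbar
  have horth : star zbar ⬝ᵥ x = 0 := by
    simpa only [Fintype.card_fin] using star_dotProduct_sub_smul_eq_zero_of_norm_eq_one hzbar zhat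
  have hx_sq : ∑ i, normSq (x i) = n - ‖c‖ ^ 2 / n := by
    simpa only [Fintype.card_fin] using sum_normSq_sub_smul_of_norm_eq_one hzbar hzhat
  calc lam * ((n : ℝ) - ‖c‖)
      ≤ lam * (n - ‖c‖ ^ 2 / n) := by
        gcongr
        rw [div_le_iff₀ (by exact_mod_cast hn), sq]
        exact mul_le_mul_of_nonneg_left hc_le (norm_nonneg c)
    _ = lam * ∑ i, normSq (x i) := by rw [hx_sq]
    _ ≤ (star x ⬝ᵥ Mbar *ᵥ x).re := hgap x horth
    _ = (star zhat ⬝ᵥ Mbar *ᵥ zhat).re := by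
        rw [hMbar.1.dotProduct_mulVec_sub_smul_of_mulVec_eq_zero hker]
end
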